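/- Let H = ⋂ᵢ₌₁ⁿ Hᵢ be a proper intersection of n ≥ 2 homothets of a smooth strictly convex domain C in ℝ². Then H has at least n singular boundary points. -/

import Mathlib

open Pointwise
open scoped RealInnerProductSpace

abbrev Plane := EuclideanSpace ℝ (Fin 2)

/-- A convex domain: compact, convex, with nonempty interior. -/
def IsConvexDomain (C : Set Plane) : Prop :=
  IsCompact C ∧ Convex ℝ C ∧ (interior C).Nonempty

/-- A strictly convex domain: a convex domain where the open segment between any two
distinct boundary points lies in the interior. -/
def IsStrictConvexDomain (C : Set Plane) : Prop :=
  IsConvexDomain C ∧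
    ∀ x ∈ frontier C, ∀ y ∈ frontier C, x ≠ y → openSegment ℝ x y ⊆ interior C

/-- `u` is an outer unit normal of a supporting line of `C` at `x`. -/
def IsOuterNormalAt (C : Set Plane) (x u : Plane) : Prop :=
  ‖u‖ = 1 ∧ ∀ y ∈ C, (inner ℝ u y : ℝ) ≤ inner ℝ u x

/-- A singular boundary point: a boundary point admitting two distinct supporting lines
(equivalently, two distinct outer unit normals). -/
def IsSingularPt (C : Set Plane) (x : Plane) : Prop :=
  x ∈ frontier C ∧ ∃ u v : Plane, u ≠ v ∧ IsOuterNormalAt C x u ∧ IsOuterNormalAt C x v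

/-- Smooth: every boundary point has a unique outer unit normal (unique supporting line). -/
def IsSmoothDomain (C : Set Plane) : Prop :=
  ∀ x ∈ frontier C, ∃! u : Plane, IsOuterNormalAt C x u

/-! The boundary of `H = ⋂ Hᵢ` is a closed curve covered by the closed sets `∂Hᵢ`, and
reducedness gives each `∂Hⱼ` a point of `∂H` lying on no other `∂Hᵢ`. Walking along the curve
from this point to the next such point, which belongs to another index, connectedness produces a
point of `∂H ∩ ∂Hⱼ ∩ ∂Hᵢ` (`i ≠ j`) strictly in between, and the arcs obtained this way are
disjoint. At such a point the outer normals of `Hᵢ` and `Hⱼ` differ: a common normal would be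
attained at the same point of `C` by strict convexity, and then one homothet would contain the
other. Both normals support `H`, so the point is singular. -/

open Set Function Real Metric

section PeriodicCover

variable {X ι : Type*} [TopologicalSpace X] [Finite ι] {F : ι → Set X}

theorem exists_mem_Ioo_mem_inter_of_isClosed (hF : ∀ i, IsClosed (F i)) {γ : ℝ → X} {a b : ℝ}
    (hab : a ≤ b) (hγ : ContinuousOn γ (Icc a b)) (hcover : ∀ t ∈ Icc a b, ∃ i, γ t ∈ F i)
    {j : ι} (ha : γ a ∈ F j) (ha' : ∀ i ≠ j, γ a ∉ F i) (hb : γ b ∉ F j) :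
    ∃ t ∈ Ioo a b, γ t ∈ F j ∧ ∃ i ≠ j, γ t ∈ F i := by
  have hY : IsClosed (⋃ i ∈ {i | i ≠ j}, F i) := (toFinite _).isClosed_biUnion fun i _ => hF i
  have hcover' : γ '' Icc a b ⊆ F j ∪ ⋃ i ∈ {i | i ≠ j}, F i := by
    rintro _ ⟨t, ht, rfl⟩
    obtain ⟨i, hi⟩ := hcover t ht
    by_cases hij : i = j
    · exact Or.inl (hij ▸ hi)
    · exact Or.inr (mem_biUnion hij hi)
  have hbY : γ b ∈ ⋃ i ∈ {i | i ≠ j}, F i :=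
    (hcover' ⟨b, right_mem_Icc.2 hab, rfl⟩).resolve_left hb
  obtain ⟨_, ⟨t, ht, rfl⟩, htj, htY⟩ := isPreconnected_closed_iff.1
    (isPreconnected_Icc.image γ hγ) _ _ (hF j) hY hcover'
    ⟨γ a, mem_image_of_mem γ (left_mem_Icc.2 hab), ha⟩
    ⟨γ b, mem_image_of_mem γ (right_mem_Icc.2 hab), hbY⟩
  obtain ⟨i, hij, hti⟩ := mem_iUnion₂.1 htY
  refine ⟨t, ⟨ht.1.lt_of_ne ?_, ht.2.lt_of_ne ?_⟩, htj, i, hij, hti⟩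
  · rintro rfl; exact ha' i hij hti
  · rintro rfl; exact hb htj

theorem exists_cyclic_successor (θ : ι → ℝ) {a b : ℝ}
    (hθab : ∀ j, θ j ∈ Ico a b) :
    ∃ σ : ι → ℝ, ∀ j, θ j < σ j ∧ σ j ≤ b ∧ (σ j = b ∨ ∃ k, σ j = θ k) ∧
      ∀ k, θ j < θ k → σ j ≤ θ k := by
  classical
  have := Fintype.ofFinite ι
  set S : Finset ℝ := insert b (Finset.univ.image θ)
  have hne : ∀ j, (S.filter (θ j < ·)).Nonempty := fun j =>
    ⟨b, Finset.mem_filter.2 ⟨Finset.mem_insert_self _ _, (hθab j).2⟩⟩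
  refine ⟨fun j => (S.filter (θ j < ·)).min' (hne j), fun j => ?_⟩
  obtain ⟨hmemS, hlt⟩ := Finset.mem_filter.1 ((S.filter (θ j < ·)).min'_mem (hne j))
  refine ⟨hlt, Finset.min'_le _ _ (Finset.mem_filter.2 ⟨Finset.mem_insert_self _ _, (hθab j).2⟩),
    ?_, fun k hk => Finset.min'_le _ _ (Finset.mem_filter.2 ⟨?_, hk⟩)⟩
  · rcases Finset.mem_insert.1 hmemS with h | h
    · exact Or.inl h
    · obtain ⟨k, -, hk⟩ := Finset.mem_image.1 h
      exact Or.inr ⟨k, hk.symm⟩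
  · exact Finset.mem_insert_of_mem (Finset.mem_image_of_mem θ (Finset.mem_univ k))

theorem Function.Periodic.card_le_encard_overlaps [Nontrivial ι] (hF : ∀ i, IsClosed (F i))
    {T : ℝ → X} {P : ℝ} (hper : Periodic T P) (hP : 0 < P) (hT : Continuous T)
    (hinj : ∀ a, InjOn T (Ico a (a + P))) (hcover : ∀ t, ∃ i, T t ∈ F i)
    (hexcl : ∀ j, ∃ t, T t ∈ F j ∧ ∀ i ≠ j, T t ∉ F i) :
    ENat.card ι ≤ (range T ∩ {w | ∃ i j, i ≠ j ∧ w ∈ F i ∧ w ∈ F j}).encard := by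
  obtain ⟨j₀⟩ := (inferInstance : Nonempty ι)
  choose t htF htF' using hexcl
  set a := t j₀
  choose θ hθ hTθ using fun j => hper.exists_mem_Ico hP (t j) a
  have hθ₀ : θ j₀ = a :=
    hinj a (hθ j₀) (left_mem_Ico.2 (lt_add_of_pos_right a hP)) (hTθ j₀).symm
  have hθinj : Injective θ := fun j k h => by
    by_contra hjk
    exact htF' k j hjk (by rw [hTθ k, ← h, ← hTθ j]; exact htF j)
  obtain ⟨σ, hσ⟩ := exists_cyclic_successor θ hθ
  have hσF : ∀ j, T (σ j) ∉ F j := by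
    intro j
    obtain ⟨hθσ, hσb, hσ | ⟨k, hk⟩, hσmin⟩ := hσ j
    · have hjj₀ : j ≠ j₀ := by
        rintro rfl
        obtain ⟨k, hk⟩ := exists_ne j
        have hjk : θ j < θ k := hθ₀ ▸ (hθ k).1.lt_of_ne (by rw [← hθ₀]; exact hθinj.ne hk.symm)
        linarith [hσmin k hjk, (hθ k).2]
      rw [hσ, hper]
      exact htF' j₀ j hjj₀
    · have hjk : j ≠ k := by rintro rfl; exact hθσ.ne' hk
      rw [hk, ← hTθ k]
      exact htF' k j hjk
  choose τ hτ hτF hτF' using fun j => exists_mem_Ioo_mem_inter_of_isClosed hF (hσ j).1.le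
    hT.continuousOn (fun s _ => hcover s) (hTθ j ▸ htF j) (hTθ j ▸ htF' j) (hσF j)
  have hτinj : Injective (T ∘ τ) := by
    intro j k h
    have hτa : ∀ j, τ j ∈ Ico a (a + P) := fun j =>
      ⟨(hθ j).1.trans (hτ j).1.le, (hτ j).2.trans_le (hσ j).2.1⟩
    have hτjk := hinj a (hτa j) (hτa k) h
    by_contra hjk
    rcases lt_or_gt_of_ne (hθinj.ne hjk) with hlt | hlt
    · linarith [(hσ j).2.2.2 k hlt, (hτ j).2, (hτ k).1]
    · linarith [(hσ k).2.2.2 j hlt, (hτ j).1, (hτ k).2]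
  calc ENat.card ι ≤ (range (T ∘ τ)).encard := hτinj.encard_range
    _ ≤ _ := by
      refine encard_le_encard (range_subset_iff.2 fun j => ⟨mem_range_self _, ?_⟩)
      obtain ⟨i, hij, hi⟩ := hτF' j
      exact ⟨i, j, hij, hi, hτF j⟩

end PeriodicCover

theorem frontier_iInter_subset_iUnion_frontier {X ι : Type*} [TopologicalSpace X] [Finite ι]
    (H : ι → Set X) :
    frontier (⋂ i, H i) ⊆ ⋃ i, frontier (H i) := by
  intro z hz
  obtain ⟨i, hi⟩ : ∃ i, z ∉ interior (H i) := by
    simpa [interior_iInter_of_finite] using hz.2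
  exact mem_iUnion.2 ⟨i, closure_mono (iInter_subset H i) hz.1, hi⟩

theorem not_subset_of_ssubset_biInter_ne {α ι : Type*} {H : ι → Set α} {i j : ι}
    (hred : (⋂ k, H k) ⊂ ⋂ k ∈ {k | k ≠ j}, H k) (hij : i ≠ j) : ¬ H i ⊆ H j := fun hsub =>
  hred.2 fun _ hz => mem_iInter.2 fun k =>
    (eq_or_ne k j).elim (fun h => h ▸ hsub (mem_iInter₂.1 hz i hij)) (mem_iInter₂.1 hz k)

section Intersections

variable {E ι : Type*} [AddCommGroup E] [Module ℝ E] [TopologicalSpace E]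
  [IsTopologicalAddGroup E] [ContinuousSMul ℝ E]

theorem Convex.exists_mem_interior_mem_frontier {K A : Set E} (hK : Convex ℝ K) (hA : IsClosed A)
    {o q : E} (hoK : o ∈ interior K) (hoA : o ∈ interior A) (hqK : q ∈ K) (hqA : q ∉ A) :
    ∃ p ∈ interior K, p ∈ frontier A := by
  obtain ⟨p, hp, hpA, hpA'⟩ := isPreconnected_closed_iff.1 (convex_segment o q).isPreconnected
    A (closure Aᶜ) hA isClosed_closure
    (fun y _ => (em (y ∈ A)).imp id fun h => subset_closure h)
    ⟨o, left_mem_segment ℝ o q, interior_subset hoA⟩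
    ⟨q, right_mem_segment ℝ o q, subset_closure hqA⟩
  have hpfr : p ∈ frontier A := by
    rw [frontier_eq_closure_inter_closure]; exact ⟨subset_closure hpA, hpA'⟩
  refine ⟨p, hK.openSegment_interior_closure_subset_interior hoK (subset_closure hqK)
    (mem_openSegment_of_ne_left_right ?_ ?_ hp), hpfr⟩
  · rintro rfl; exact hpfr.2 hoA
  · rintro rfl; exact hqA hpA

theorem exists_mem_frontier_iInter_forall_ne_mem_interior {H : ι → Set E}
    (hcl : ∀ i, IsClosed (H i)) (hcv : ∀ i, Convex ℝ (H i)) (hint : (interior (⋂ i, H i)).Nonempty)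
    {j : ι} (hred : (⋂ i, H i) ⊂ ⋂ i ∈ {i | i ≠ j}, H i) :
    ∃ p ∈ frontier (⋂ i, H i), p ∈ frontier (H j) ∧ ∀ i ≠ j, p ∈ interior (H i) := by
  obtain ⟨o, ho⟩ := hint
  obtain ⟨q, hqK, hq⟩ := exists_of_ssubset hred
  have hqj : q ∉ H j := fun hqj => hq <| mem_iInter.2 fun i =>
    (eq_or_ne i j).elim (fun h => h ▸ hqj) (mem_iInter₂.1 hqK i)
  obtain ⟨p, hpK, hpj⟩ := (convex_iInter₂ fun i _ => hcv i).exists_mem_interior_mem_frontier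
    (hcl j) (interior_mono hred.subset ho) (interior_mono (iInter_subset H j) ho) hqK hqj
  have hpi : ∀ i ≠ j, p ∈ interior (H i) := fun i hij =>
    interior_mono (biInter_subset_of_mem hij) hpK
  have hpH : p ∈ ⋂ i, H i := mem_iInter.2 fun i =>
    (eq_or_ne i j).elim (fun h => h ▸ (hcl j).frontier_subset hpj)
      (fun hij => interior_subset (hpi i hij))
  exact ⟨p, ⟨subset_closure hpH, fun h => hpj.2 (interior_mono (iInter_subset H j) h)⟩, hpj, hpi⟩

end Intersections

theorem Convex.exists_periodic_param_frontier {s : Set Plane} (hs : Convex ℝ s)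
    (hne : (interior s).Nonempty) (hb : Bornology.IsBounded s) :
    ∃ T : ℝ → Plane, Continuous T ∧ Periodic T (2 * π) ∧
      (∀ a, InjOn T (Ico a (a + 2 * π))) ∧ range T = frontier s := by
  obtain ⟨h, -, -, hfr⟩ := exists_homeomorph_image_interior_closure_frontier_eq_unitBall hs hne hb
  let e := Complex.orthonormalBasisOneI.repr
  have hsphere : range (fun θ => e (Circle.exp θ)) = sphere 0 1 := by
    ext w
    refine ⟨?_, fun hw => ?_⟩
    · rintro ⟨θ, rfl⟩
      simp
    · obtain ⟨θ, hθ⟩ :=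
        Circle.exp_surjective ⟨e.symm w, mem_sphere_zero_iff_norm.2 (by simpa using hw)⟩
      exact ⟨θ, by simp [hθ]⟩
  refine ⟨fun θ => h.symm (e (Circle.exp θ)), by fun_prop, fun θ => by simp, fun a => ?_, ?_⟩
  · exact h.symm.injective.comp_injOn (e.injective.comp_injOn
      (Subtype.val_injective.comp_injOn (Circle.exp_injOn_Ico (by linarith))))
  · rw [range_comp' h.symm, hsphere, ← hfr]
    exact h.toEquiv.symm_image_image _

theorem IsOuterNormalAt.notMem_interior {s : Set Plane} {z u : Plane} (hu : IsOuterNormalAt s z u) :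
    z ∉ interior s := by
  intro hz
  have hmax : IsLocalMax (fun y => ⟪u, y⟫) z :=
    Filter.mem_of_superset (mem_interior_iff_mem_nhds.1 hz) hu.2
  have h0 := hmax.hasFDerivAt_eq_zero (innerSL ℝ u).hasFDerivAt
  have : ⟪u, u⟫ = 0 := by rw [← innerSL_apply_apply, h0]; rfl
  simpa [inner_self_eq_zero.1 this] using hu.1

theorem IsOuterNormalAt.mono {s t : Set Plane} {z u : Plane} (hu : IsOuterNormalAt t z u)
    (hst : s ⊆ t) : IsOuterNormalAt s z u :=
  ⟨hu.1, fun y hy => hu.2 y (hst hy)⟩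

theorem exists_isOuterNormalAt {s : Set Plane} (hs : Convex ℝ s) (hne : (interior s).Nonempty)
    {z : Plane} (hz : z ∈ frontier s) : ∃ u, IsOuterNormalAt s z u := by
  obtain ⟨f, c, hf, hfs, hfz⟩ := geometric_hahn_banach_of_nonempty_interior hs (convex_singleton z)
    (disjoint_singleton_right.2 hz.2) hne (singleton_nonempty z)
  set v := (InnerProductSpace.toDual ℝ Plane).symm f
  have hv : v ≠ 0 := by simpa [v] using hf
  refine ⟨‖v‖⁻¹ • v, norm_smul_inv_norm hv, fun y hy => ?_⟩
  simp only [real_inner_smul_left, v, InnerProductSpace.toDual_symm_apply]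
  gcongr
  exact (hfs y hy).trans (hfz z rfl)

theorem IsStrictConvexDomain.eq_of_isOuterNormalAt {C : Set Plane} (hC : IsStrictConvexDomain C)
    {c c' u : Plane} (hc : c ∈ C) (hc' : c' ∈ C) (hu : IsOuterNormalAt C c u)
    (hu' : IsOuterNormalAt C c' u) : c = c' := by
  by_contra hne
  have hfr : ∀ {d}, d ∈ C → IsOuterNormalAt C d u → d ∈ frontier C := fun hd hd' =>
    ⟨subset_closure hd, hd'.notMem_interior⟩
  have heq : ⟪u, c⟫ = ⟪u, c'⟫ := le_antisymm (hu'.2 c hc) (hu.2 c' hc')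
  obtain ⟨m, hm⟩ : (openSegment ℝ c c').Nonempty := ⟨_, midpoint_mem_openSegment c c'⟩
  refine (IsOuterNormalAt.notMem_interior (z := m) ⟨hu.1, fun y hy => ?_⟩)
    (hC.2 c (hfr hc hu) c' (hfr hc' hu') hne hm)
  obtain ⟨a, b, -, -, hab, rfl⟩ := hm
  rw [inner_add_right, real_inner_smul_right, real_inner_smul_right, ← heq, ← add_mul, hab,
    one_mul]
  exact hu.2 y hy

theorem mem_homothet_iff {C : Set Plane} {x z : Plane} {l : ℝ} :
    z ∈ x +ᵥ l • C ↔ ∃ c ∈ C, x + l • c = z := by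
  simp only [mem_vadd_set, mem_smul_set, vadd_eq_add]
  constructor
  · rintro ⟨_, ⟨c, hc, rfl⟩, rfl⟩; exact ⟨c, hc, rfl⟩
  · rintro ⟨c, hc, rfl⟩; exact ⟨_, ⟨c, hc, rfl⟩, rfl⟩

theorem IsOuterNormalAt.of_homothet {C : Set Plane} {x c u : Plane} {l : ℝ} (hl : 0 < l)
    (hu : IsOuterNormalAt (x +ᵥ l • C) (x + l • c) u) : IsOuterNormalAt C c u := by
  refine ⟨hu.1, fun y hy => ?_⟩
  have := hu.2 (x + l • y) (mem_homothet_iff.2 ⟨y, hy, rfl⟩)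
  simp only [inner_add_right, real_inner_smul_right, add_le_add_iff_left] at this
  exact le_of_mul_le_mul_left this hl

theorem homothet_subset_homothet {C : Set Plane} (hC : Convex ℝ C) {c x₁ x₂ : Plane}
    {l₁ l₂ : ℝ} (hc : c ∈ C) (hl₁ : 0 < l₁) (hl : l₁ ≤ l₂) (h : x₁ + l₁ • c = x₂ + l₂ • c) :
    x₁ +ᵥ l₁ • C ⊆ x₂ +ᵥ l₂ • C := by
  have hl₂ : 0 < l₂ := hl₁.trans_le hl
  intro z hz
  obtain ⟨y, hy, rfl⟩ := mem_homothet_iff.1 hz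
  refine mem_homothet_iff.2 ⟨(1 - l₁ / l₂) • c + (l₁ / l₂) • y,
    hC hc hy (by rw [sub_nonneg, div_le_one hl₂]; exact hl) (by positivity) (by ring), ?_⟩
  have h₁ : l₂ * (1 - l₁ / l₂) = l₂ - l₁ := by field_simp
  have h₂ : l₂ * (l₁ / l₂) = l₁ := by field_simp
  rw [smul_add, smul_smul, smul_smul, h₁, h₂]
  linear_combination (norm := module) -h

theorem homothet_subset_or_subset_of_isOuterNormalAt {C : Set Plane} (hC : IsStrictConvexDomain C)
    {x₁ x₂ z u : Plane} {l₁ l₂ : ℝ} (hl₁ : 0 < l₁) (hl₂ : 0 < l₂) (hz₁ : z ∈ x₁ +ᵥ l₁ • C)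
    (hz₂ : z ∈ x₂ +ᵥ l₂ • C) (hu₁ : IsOuterNormalAt (x₁ +ᵥ l₁ • C) z u)
    (hu₂ : IsOuterNormalAt (x₂ +ᵥ l₂ • C) z u) :
    x₁ +ᵥ l₁ • C ⊆ x₂ +ᵥ l₂ • C ∨ x₂ +ᵥ l₂ • C ⊆ x₁ +ᵥ l₁ • C := by
  obtain ⟨c₁, hc₁, rfl⟩ := mem_homothet_iff.1 hz₁
  obtain ⟨c₂, hc₂, hz⟩ := mem_homothet_iff.1 hz₂
  rw [← hz] at hu₂
  obtain rfl := hC.eq_of_isOuterNormalAt hc₁ hc₂ (hu₁.of_homothet hl₁) (hu₂.of_homothet hl₂)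
  rcases le_total l₁ l₂ with hl | hl
  · exact Or.inl (homothet_subset_homothet hC.1.2.1 hc₁ hl₁ hl hz.symm)
  · exact Or.inr (homothet_subset_homothet hC.1.2.1 hc₁ hl₂ hl hz)

theorem isSingularPt_iInter {ι : Type*} {H : ι → Set Plane} (hcv : ∀ i, Convex ℝ (H i))
    (hint : (interior (⋂ i, H i)).Nonempty) {z : Plane} (hz : z ∈ frontier (⋂ i, H i)) {i j : ι}
    (hzi : z ∈ frontier (H i)) (hzj : z ∈ frontier (H j))
    (hij : ∀ u, IsOuterNormalAt (H i) z u → ¬ IsOuterNormalAt (H j) z u) :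
    IsSingularPt (⋂ i, H i) z := by
  have hne : ∀ k, (interior (H k)).Nonempty := fun k =>
    hint.mono (interior_mono (iInter_subset H k))
  obtain ⟨u, hu⟩ := exists_isOuterNormalAt (hcv i) (hne i) hzi
  obtain ⟨v, hv⟩ := exists_isOuterNormalAt (hcv j) (hne j) hzj
  exact ⟨hz, u, v, by rintro rfl; exact hij u hu hv, hu.mono (iInter_subset H i),
    hv.mono (iInter_subset H j)⟩

theorem stmt10_general (C : Set Plane) (hC : IsStrictConvexDomain C)
    (n : ℕ) (hn : 2 ≤ n) (x : Fin n → Plane) (l : Fin n → ℝ) (hl : ∀ i, 0 < l i)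
    (H : Fin n → Set Plane) (hH : ∀ i, H i = x i +ᵥ l i • C)
    (hint : (interior (⋂ i, H i)).Nonempty)
    (hred : ∀ j : Fin n, (⋂ i, H i) ⊂ ⋂ i ∈ {i : Fin n | i ≠ j}, H i) :
    (n : ℕ∞) ≤ {p : Plane | IsSingularPt (⋂ i, H i) p}.encard := by
  obtain rfl : H = fun i => x i +ᵥ l i • C := funext hH
  have hcpt : ∀ i, IsCompact (x i +ᵥ l i • C) := fun i => (hC.1.1.smul (l i)).vadd (x i)
  have hcl : ∀ i, IsClosed (x i +ᵥ l i • C) := fun i => (hcpt i).isClosed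
  have hcv : ∀ i, Convex ℝ (x i +ᵥ l i • C) := fun i => (hC.1.2.1.smul (l i)).vadd (x i)
  have : Nontrivial (Fin n) := Fin.nontrivial_iff_two_le.2 hn
  obtain ⟨T, hT, hper, hinj, hrange⟩ := (convex_iInter hcv).exists_periodic_param_frontier hint
    ((hcpt ⟨0, by omega⟩).isBounded.subset (iInter_subset _ _))
  calc (n : ℕ∞) = ENat.card (Fin n) := by simp
    _ ≤ (range T ∩ {w | ∃ i j, i ≠ j ∧ w ∈ frontier (x i +ᵥ l i • C) ∧
          w ∈ frontier (x j +ᵥ l j • C)}).encard := by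
      refine hper.card_le_encard_overlaps (fun i => isClosed_frontier) two_pi_pos hT hinj
        (fun t => mem_iUnion.1 (frontier_iInter_subset_iUnion_frontier _
          (hrange ▸ mem_range_self t))) fun j => ?_
      obtain ⟨p, hp, hpj, hpi⟩ :=
        exists_mem_frontier_iInter_forall_ne_mem_interior hcl hcv hint (hred j)
      obtain ⟨t, rfl⟩ : p ∈ range T := hrange ▸ hp
      exact ⟨t, hpj, fun i hij hti => hti.2 (hpi i hij)⟩
    _ ≤ _ := encard_le_encard fun w ⟨hw, i, j, hij, hi, hj⟩ =>
      isSingularPt_iInter hcv hint (hrange ▸ hw) hi hj fun u hui huj =>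
        (homothet_subset_or_subset_of_isOuterNormalAt hC (hl i) (hl j)
          ((hcl i).frontier_subset hi) ((hcl j).frontier_subset hj) hui huj).elim
          (not_subset_of_ssubset_biInter_ne (hred j) hij)
          (not_subset_of_ssubset_biInter_ne (hred i) hij.symm)

theorem stmt10 (C : Set Plane) (hC : IsStrictConvexDomain C) (hCs : IsSmoothDomain C)
    (n : ℕ) (hn : 2 ≤ n) (x : Fin n → Plane) (l : Fin n → ℝ) (hl : ∀ i, 0 < l i)
    (H : Fin n → Set Plane) (hH : ∀ i, H i = x i +ᵥ l i • C)
    (hint : (interior (⋂ i, H i)).Nonempty)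
    (hred : ∀ j : Fin n, (⋂ i, H i) ⊂ ⋂ i ∈ {i : Fin n | i ≠ j}, H i) :
    (n : ℕ∞) ≤ {p : Plane | IsSingularPt (⋂ i, H i) p}.encard :=
  stmt10_general C hC n hn x l hl H hH hint hred
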